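/- arXiv:2412.02326 — 5 statements merged into one kernel-verified Lean document; each statement's English description precedes it below -/
import Mathlib

section
/- For ρ > 1, the function k_ρ is strictly decreasing on [0,1]. -/
/-!
`k_ρ(s)` is the larger root of `X² - ρ(1 - s²)X - s²`. Raising `s²` by `δ > 0` changes this
quadratic by `-δ(ρX - 1)`, which is negative at `X = k_ρ ≥ 1 > 1/ρ`. Hence the old quadratic
is negative at the new root, which therefore lies strictly below the old larger root. The bound
`k_ρ ≥ 1` comes from `k_ρ(s) ≥ 1 ⟺ (ρ - 1)(1 - s²) ≥ 0`.
-/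

open Real

section LargerRoot

variable {a c x : ℝ}

lemma add_sqrt_isRoot (h : 0 ≤ a ^ 2 + c) :
    (a + √(a ^ 2 + c)) ^ 2 - 2 * a * (a + √(a ^ 2 + c)) - c = 0 := by
  nlinarith [sq_sqrt h]

lemma lt_add_sqrt_of_sq_sub_neg (h : x ^ 2 - 2 * a * x - c < 0) : x < a + √(a ^ 2 + c) := by
  have : x - a < √(a ^ 2 + c) := lt_sqrt_of_sq_lt (by linarith)
  linarith

lemma one_le_add_sqrt (h : 1 ≤ 2 * a + c) : 1 ≤ a + √(a ^ 2 + c) := by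
  have : 1 - a ≤ √(a ^ 2 + c) := le_sqrt_of_sq_le (by linarith)
  linarith

end LargerRoot

noncomputable def kRho (ρ s : ℝ) : ℝ := ρ / 2 * (1 - s ^ 2) + √(ρ ^ 2 / 4 * (1 - s ^ 2) ^ 2 + s ^ 2)

lemma kRho_eq_add_sqrt (ρ s : ℝ) :
    kRho ρ s = ρ / 2 * (1 - s ^ 2) + √((ρ / 2 * (1 - s ^ 2)) ^ 2 + s ^ 2) := by
  rw [kRho]; ring_nf

lemma kRho_isRoot (ρ s : ℝ) : kRho ρ s ^ 2 - ρ * (1 - s ^ 2) * kRho ρ s - s ^ 2 = 0 := by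
  rw [kRho_eq_add_sqrt]
  linear_combination add_sqrt_isRoot (a := ρ / 2 * (1 - s ^ 2)) (c := s ^ 2) (by positivity)

lemma lt_kRho_of_sq_sub_neg {ρ s x : ℝ} (h : x ^ 2 - ρ * (1 - s ^ 2) * x - s ^ 2 < 0) :
    x < kRho ρ s := by
  rw [kRho_eq_add_sqrt]
  exact lt_add_sqrt_of_sq_sub_neg (by linarith)

lemma one_le_kRho {ρ s : ℝ} (hρ : 1 ≤ ρ) (hs : s ^ 2 ≤ 1) : 1 ≤ kRho ρ s := by
  rw [kRho_eq_add_sqrt]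
  exact one_le_add_sqrt (by nlinarith)

lemma kRho_lt_kRho {ρ s s' : ℝ} (hρ : 1 < ρ) (hss' : s ^ 2 < s' ^ 2) (hs' : s' ^ 2 ≤ 1) :
    kRho ρ s' < kRho ρ s := by
  have hk' := one_le_kRho hρ.le hs'
  apply lt_kRho_of_sq_sub_neg
  have hmul : 0 < (s' ^ 2 - s ^ 2) * (ρ * kRho ρ s' - 1) := by
    apply mul_pos <;> nlinarith
  linarith [kRho_isRoot ρ s']

theorem k_rho_strictAnti (ρ : ℝ) (hρ : 1 < ρ) :
    StrictAntiOn (fun s : ℝ => ρ/2 * (1 - s^2) + Real.sqrt (ρ^2/4 * (1 - s^2)^2 + s^2))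
      (Set.Icc (0:ℝ) 1) := by
  intro s hs s' hs' hss'
  exact kRho_lt_kRho hρ (pow_lt_pow_left₀ hss' hs.1 two_ne_zero)
    (pow_le_one₀ hs'.1 hs'.2)
end

section
/- For ρ > 1 and all s with 0 < s < 1, one has the strict inequalities -(1 - 1/ρ) < (s - s·k_ρ(s)²)/(k_ρ(s)² - s²) < 0. -/
set_option maxHeartbeats 800000 in
theorem technical_lemma (ρ : ℝ) (hρ : 1 < ρ) (s : ℝ) (hs : 0 < s) (hs1 : s < 1) :
    -(1 - 1/ρ) < (s - s * (ρ/2 * (1 - s^2) + Real.sqrt (ρ^2/4 * (1 - s^2)^2 + s^2))^2)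
        / ((ρ/2 * (1 - s^2) + Real.sqrt (ρ^2/4 * (1 - s^2)^2 + s^2))^2 - s^2) ∧
    (s - s * (ρ/2 * (1 - s^2) + Real.sqrt (ρ^2/4 * (1 - s^2)^2 + s^2))^2)
        / ((ρ/2 * (1 - s^2) + Real.sqrt (ρ^2/4 * (1 - s^2)^2 + s^2))^2 - s^2) < 0 := by
  set r := Real.sqrt (ρ^2/4 * (1 - s^2)^2 + s^2) with hr
  set k := ρ/2 * (1 - s^2) + r with hkdef
  have hs2 : (0:ℝ) < 1 - s^2 := by nlinarith
  have hrnn : 0 ≤ r := Real.sqrt_nonneg _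
  have hrsq : r^2 = ρ^2/4 * (1 - s^2)^2 + s^2 := by
    rw [hr]; exact Real.sq_sqrt (by positivity)
  clear_value r
  clear_value k
  clear hr
  have hρ0 : (0:ℝ) < ρ := by linarith
  have hk : k^2 = ρ * (1 - s^2) * k + s^2 := by
    rw [hkdef]; nlinarith [hrsq]
  have hkpos : 0 < k := by
    have h1 : 0 < ρ/2 * (1 - s^2) := by positivity
    linarith [hkdef.ge, h1, hrnn]
  have hk1 : 1 < k := by
    by_contra h
    push_neg at h
    nlinarith [hk, mul_pos hkpos hs2, mul_pos (sub_pos.mpr hρ) (mul_pos hs2 hkpos),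
      mul_nonneg (mul_nonneg hs.le hs.le) (sub_nonneg.mpr h)]
  clear hkdef hrsq hrnn
  have hD : 0 < k^2 - s^2 := by nlinarith [mul_pos hkpos hs2]
  constructor
  · rw [lt_div_iff₀ hD]
    rw [div_eq_mul_inv, ← sub_pos]
    have h1 : 0 < (s - k * (1 - ρ*(1-s))) := by
      nlinarith [hk, mul_pos hs hkpos, mul_pos (mul_pos hs hs) hkpos,
        mul_pos hkpos (mul_pos hs (mul_pos (sub_pos.mpr hρ) (mul_pos (sub_pos.mpr hs1) (sub_pos.mpr hs1))))]
    have hinv : ρ * ρ⁻¹ = 1 := mul_inv_cancel₀ (ne_of_gt hρ0)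
    have key : 0 < ρ * ((s - s*k^2) - -(1 - 1*ρ⁻¹) * (k^2 - s^2)) := by
      have heq : ρ * ((s - s*k^2) - -(1 - 1*ρ⁻¹) * (k^2 - s^2))
          = ρ * (s - s*k^2) + (ρ - ρ*ρ⁻¹) * (k^2 - s^2) := by ring
      rw [heq, hinv]
      nlinarith [hk, mul_pos (mul_pos hs2 hρ0) h1]
    nlinarith [key, hρ0]
  · apply div_neg_of_neg_of_pos _ hD
    nlinarith [hk, mul_pos (mul_pos hs hkpos) (sub_pos.mpr hρ), mul_pos hs hs2]
end

section
/- Let A be a bounded operator on a complex Hilbert space H, σ a unit complex number with σ not in the spectrum of A, and ρ ≥ 1. Then σ(σ-A)^{-1} + (σ(σ-A)^{-1})* - (2 - ρ)·I equals √ρ·((σ* - A*)^{-1})·(I - 2(1 - 1/ρ)·Re(σ*·A) - (2/ρ - 1)·A*A)·√ρ·(σ - A)^{-1}, where Re(T) := (T + T*)/2. -/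
theorem potential_identity
    {H : Type*} [NormedAddCommGroup H] [InnerProductSpace ℂ H] [CompleteSpace H]
    (A : H →L[ℂ] H) (ρ : ℝ) (hρ : 1 ≤ ρ) (σ : ℂ) (hσ : ‖σ‖ = 1)
    (hspec : σ ∉ spectrum ℂ A) :
    σ • Ring.inverse (σ • (1 : H →L[ℂ] H) - A)
      + star (σ • Ring.inverse (σ • (1 : H →L[ℂ] H) - A))
      - ((2 : ℂ) - (ρ : ℂ)) • (1 : H →L[ℂ] H)
    = ((Real.sqrt ρ : ℂ) • star (Ring.inverse (σ • (1 : H →L[ℂ] H) - A)))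
      * ((1 : H →L[ℂ] H)
          - ((1 : ℂ) - 1/(ρ : ℂ)) • ((starRingEnd ℂ σ) • A + star ((starRingEnd ℂ σ) • A))
          - (2/(ρ : ℂ) - 1) • (star A * A))
      * ((Real.sqrt ρ : ℂ) • Ring.inverse (σ • (1 : H →L[ℂ] H) - A)) := by
  have hρ0 : (ρ : ℂ) ≠ 0 := by
    norm_cast
    intro h; rw [h] at hρ; linarith
  have hσσ : (starRingEnd ℂ σ) * σ = 1 := by
    rw [Complex.conj_mul', hσ]; norm_num
  have hσσ' : σ * (starRingEnd ℂ σ) = 1 := by rw [mul_comm]; exact hσσ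
  set B : H →L[ℂ] H := σ • (1 : H →L[ℂ] H) - A with hBdef
  have hu : IsUnit B := by
    have h := spectrum.notMem_iff.mp hspec
    rwa [Algebra.algebraMap_eq_smul_one] at h
  set R : H →L[ℂ] H := Ring.inverse B with hRdef
  have h1 : B * R = 1 := Ring.mul_inverse_cancel B hu
  have h2 : R * B = 1 := Ring.inverse_mul_cancel B hu
  have h3 : star B * star R = 1 := by rw [← star_mul, h2, star_one]
  have hc : (Real.sqrt ρ : ℂ) * (Real.sqrt ρ : ℂ) = (ρ : ℂ) := by
    rw [← Complex.ofReal_mul, Real.mul_self_sqrt (by linarith)]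
  set L : H →L[ℂ] H := σ • R + star (σ • R) - ((2 : ℂ) - (ρ : ℂ)) • (1 : H →L[ℂ] H) with hLdef
  set M : H →L[ℂ] H := (1 : H →L[ℂ] H)
      - ((1 : ℂ) - 1/(ρ : ℂ)) • ((starRingEnd ℂ σ) • A + star ((starRingEnd ℂ σ) • A))
      - (2/(ρ : ℂ) - 1) • (star A * A) with hMdef
  have e1 : star B * (σ • R) * B = σ • star B := by
    rw [mul_smul_comm, smul_mul_assoc, mul_assoc, h2, mul_one]
  have e2 : star B * star (σ • R) * B = (starRingEnd ℂ σ) • B := by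
    rw [star_smul, mul_smul_comm, smul_mul_assoc, h3, one_mul]; rfl
  have e3 : star B * (((2:ℂ) - (ρ:ℂ)) • (1 : H →L[ℂ] H)) * B
      = ((2:ℂ) - (ρ:ℂ)) • (star B * B) := by
    rw [mul_smul_comm, mul_one, smul_mul_assoc]
  have hstarB : star B = (starRingEnd ℂ σ) • (1 : H →L[ℂ] H) - star A := by
    rw [hBdef, star_sub, star_smul, star_one]; rfl
  have h4 : star R * star B = 1 := by rw [← star_mul, h1, star_one]
  have hBB : star B * B = (1 : H →L[ℂ] H) - (starRingEnd ℂ σ) • A - σ • star A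
      + star A * A := by
    rw [hstarB, hBdef]
    simp only [sub_mul, mul_sub, smul_sub, smul_mul_assoc, mul_smul_comm,
      smul_smul, one_mul, mul_one, hσσ, hσσ', one_smul]
    abel
  clear_value B R L M
  have c1 : (ρ : ℂ) * ((1:ℂ) - 1/(ρ:ℂ)) = (ρ:ℂ) - 1 := by field_simp
  have c2 : (ρ : ℂ) * (2/(ρ:ℂ) - 1) = 2 - (ρ:ℂ) := by field_simp
  have key : star B * L * B = (ρ : ℂ) • M := by
    rw [hLdef, mul_sub, mul_add, sub_mul, add_mul, e1, e2, e3]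
    rw [hMdef, smul_sub, smul_sub, smul_smul, smul_smul, c1, c2, hBB, hstarB, hBdef]
    simp only [star_smul, Complex.star_def, Complex.conj_conj, smul_sub, smul_add,
      smul_smul, hσσ, hσσ', one_smul]
    module
  have main : star R * ((ρ:ℂ) • M) * R = L := by
    rw [← key]
    simp only [← mul_assoc]
    rw [h4, one_mul, mul_assoc, h1, mul_one]
  have hrhs : ((Real.sqrt ρ : ℂ) • star R) * M * ((Real.sqrt ρ : ℂ) • R)
      = star R * ((ρ:ℂ) • M) * R := by
    rw [smul_mul_assoc, smul_mul_assoc, mul_smul_comm, smul_smul, hc,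
      mul_smul_comm, smul_mul_assoc]
  rw [hrhs, main]
end

section
/- Let A be a bounded operator on a complex Hilbert space, ρ ≥ 1, and z ∈ ℂ with |z| ≤ 1 such that I - (1/ρ + (1 - 1/ρ)·conj(z))·A is invertible, and let S(z) = (I - (1/ρ + (1-1/ρ)z̄)A)^{-1} and Re(T) = (T + T*)/2. Then the identity S(z)* · (I - 2(1-1/ρ)Re(z̄A) - (1/ρ² - (1-1/ρ)²|z|²)A*A) · S(z) = Re(I + (2/ρ)·A·S(z)) holds. -/
theorem resolvent_identity
    {H : Type*} [NormedAddCommGroup H] [InnerProductSpace ℂ H] [CompleteSpace H]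
    (A : H →L[ℂ] H) (ρ : ℝ) (hρ : 1 ≤ ρ) (z : ℂ) (hz : ‖z‖ ≤ 1)
    (hinv : IsUnit ((1 : H →L[ℂ] H) - (1/(ρ : ℂ) + (1 - 1/(ρ : ℂ)) * (starRingEnd ℂ z)) • A)) :
    star (Ring.inverse ((1 : H →L[ℂ] H) - (1/(ρ : ℂ) + (1 - 1/(ρ : ℂ)) * (starRingEnd ℂ z)) • A))
      * ((1 : H →L[ℂ] H)
          - ((1 : ℂ) - 1/(ρ : ℂ)) • ((starRingEnd ℂ z) • A + star ((starRingEnd ℂ z) • A))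
          - (1/(ρ : ℂ)^2 - (1 - 1/(ρ : ℂ))^2 * ((‖z‖ : ℂ))^2) • (star A * A))
      * Ring.inverse ((1 : H →L[ℂ] H) - (1/(ρ : ℂ) + (1 - 1/(ρ : ℂ)) * (starRingEnd ℂ z)) • A)
    = (1/2 : ℂ) •
        (((1 : H →L[ℂ] H) + (2/(ρ : ℂ)) •
            (A * Ring.inverse ((1 : H →L[ℂ] H)
              - (1/(ρ : ℂ) + (1 - 1/(ρ : ℂ)) * (starRingEnd ℂ z)) • A)))
          + star ((1 : H →L[ℂ] H) + (2/(ρ : ℂ)) •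
            (A * Ring.inverse ((1 : H →L[ℂ] H)
              - (1/(ρ : ℂ) + (1 - 1/(ρ : ℂ)) * (starRingEnd ℂ z)) • A)))) := by
  set c : ℂ := 1/(ρ : ℂ) + (1 - 1/(ρ : ℂ)) * (starRingEnd ℂ z) with hc
  set T : H →L[ℂ] H := 1 - c • A with hT
  set S : H →L[ℂ] H := Ring.inverse T with hS
  have hTS : T * S = 1 := Ring.mul_inverse_cancel _ hinv
  have hST : S * T = 1 := Ring.inverse_mul_cancel _ hinv
  set B : H →L[ℂ] H := 1 + (2/(ρ:ℂ)) • (A * S) with hB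
  set M : H →L[ℂ] H := (1 : H →L[ℂ] H)
          - ((1 : ℂ) - 1/(ρ : ℂ)) • ((starRingEnd ℂ z) • A + star ((starRingEnd ℂ z) • A))
          - (1/(ρ : ℂ)^2 - (1 - 1/(ρ : ℂ))^2 * ((‖z‖ : ℂ))^2) • (star A * A) with hM
  -- key reduction
  have key : M = star T * ((1/2 : ℂ) • (B + star B)) * T → star S * M * S = (1/2 : ℂ) • (B + star B) := by
    intro h
    have h1 : star S * star T = 1 := by rw [← star_mul, hTS, star_one]
    calc star S * M * S = (star S * star T) * ((1/2 : ℂ) • (B + star B)) * (T * S) := by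
          rw [h]; noncomm_ring
      _ = (1/2 : ℂ) • (B + star B) := by rw [h1, hTS, one_mul, mul_one]
  refine key ?_
  -- simplify star T * B * T
  have hBT : B * T = T + (2/(ρ:ℂ)) • A := by
    rw [hB, add_mul, one_mul, smul_mul_assoc, mul_assoc, hST, mul_one]
  set D : H →L[ℂ] H := star T * T + (2/(ρ:ℂ)) • (star T * A) with hD
  have h2 : star T * ((1/2 : ℂ) • (B + star B)) * T = (1/2 : ℂ) • (D + star D) := by
    have e1 : star T * B * T = D := by
      rw [mul_assoc, hBT, mul_add, mul_smul_comm, hD]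
    have e2 : star T * star B * T = star D := by
      rw [← e1]; simp only [star_mul, star_star]; noncomm_ring
    calc star T * ((1/2 : ℂ) • (B + star B)) * T
        = (1/2 : ℂ) • (star T * B * T + star T * star B * T) := by
          simp only [mul_smul_comm, smul_mul_assoc, mul_add, add_mul]
      _ = (1/2 : ℂ) • (D + star D) := by rw [e1, e2]
  rw [h2]
  -- final scalar algebra
  have hzz : ((‖z‖ : ℂ))^2 = z * (starRingEnd ℂ) z := by
    rw [Complex.mul_conj]; norm_cast; rw [Complex.normSq_eq_norm_sq]
  have hcc : (starRingEnd ℂ) c = 1/(ρ : ℂ) + (1 - 1/(ρ : ℂ)) * z := by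
    simp [hc, map_add, map_mul, map_sub, map_one, map_div₀, Complex.conj_ofReal, Complex.conj_conj]
  have hr2 : (starRingEnd ℂ) (2/(ρ:ℂ)) = 2/(ρ:ℂ) := by
    rw [map_div₀, Complex.conj_ofReal, map_ofNat]
  have hr1 : (starRingEnd ℂ) (1/(ρ:ℂ)) = 1/(ρ:ℂ) := by
    rw [map_div₀, Complex.conj_ofReal, map_one]
  rw [hM, hD, hT, hzz]
  simp only [star_sub, star_one, star_smul, star_star, star_add, star_mul, Complex.star_def, hcc, hr2, hr1, Complex.conj_conj,
    sub_mul, mul_sub, one_mul, mul_one, smul_mul_assoc, mul_smul_comm, smul_smul,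
    smul_add, smul_sub]
  module
end

section
/- For complex numbers a, b, the operator norm of the 2×2 matrix [[a, b],[0, a]] equals |b|/2 + sqrt(|b|²/4 + |a|²). -/
/-!
The value `r = ‖b‖/2 + √(‖b‖²/4 + ‖a‖²)` is the larger root of `t² - ‖b‖ t - ‖a‖²`, i.e.
`r (r - ‖b‖) = ‖a‖²`. The triangle inequality reduces the upper bound to the real matrix
`[[‖a‖, ‖b‖], [0, ‖a‖]]`, for which `r (r² (p² + q²) - ‖A (p, q)‖²) = ‖b‖ (r p - ‖a‖ q)² ≥ 0`.
The bound is attained at `x = (conj a · e^{i arg b}, r)`, where `a x₀ + b x₁ = r² e^{i arg b}`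
and `‖M x‖² = r² ‖x‖²`.
-/

open Complex ComplexConjugate

lemma EuclideanSpace.norm_sq_fin_two {𝕜 : Type*} [RCLike 𝕜] (x : EuclideanSpace 𝕜 (Fin 2)) :
    ‖x‖ ^ 2 = ‖x 0‖ ^ 2 + ‖x 1‖ ^ 2 := by
  rw [EuclideanSpace.norm_sq_eq, Fin.sum_univ_two]

lemma norm_sq_toEuclideanCLM_jordan_apply {𝕜 : Type*} [RCLike 𝕜] (a b : 𝕜)
    (x : EuclideanSpace 𝕜 (Fin 2)) :
    ‖Matrix.toEuclideanCLM (𝕜 := 𝕜) (n := Fin 2) !![a, b; 0, a] x‖ ^ 2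
      = ‖a * x 0 + b * x 1‖ ^ 2 + ‖a * x 1‖ ^ 2 := by
  rw [EuclideanSpace.norm_sq_fin_two]
  simp [Matrix.mulVec, dotProduct, Fin.sum_univ_two]

lemma sq_add_sq_le_of_mul_sub_eq_sq {α β r : ℝ} (hβ : 0 ≤ β) (hβr : β ≤ r)
    (hroot : r * (r - β) = α ^ 2) (p q : ℝ) :
    (α * p + β * q) ^ 2 + (α * q) ^ 2 ≤ r ^ 2 * (p ^ 2 + q ^ 2) := by
  rcases (hβ.trans hβr).eq_or_lt with rfl | hr
  · obtain rfl : β = 0 := le_antisymm hβr hβ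
    obtain rfl : α = 0 := by simpa using hroot.symm
    simp
  · have hid : r * (r ^ 2 * (p ^ 2 + q ^ 2) - ((α * p + β * q) ^ 2 + (α * q) ^ 2))
        = β * (r * p - α * q) ^ 2 := by
      linear_combination (r * p ^ 2 + r * q ^ 2 + β * q ^ 2) * hroot
    have hprod : 0 ≤ r * (r ^ 2 * (p ^ 2 + q ^ 2) - ((α * p + β * q) ^ 2 + (α * q) ^ 2)) :=
      hid ▸ by positivity
    exact sub_nonneg.mp (nonneg_of_mul_nonneg_right hprod hr)

section
variable {a b : ℂ} {r : ℝ}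

lemma norm_toEuclideanCLM_jordan_apply_le (hbr : ‖b‖ ≤ r) (hroot : r * (r - ‖b‖) = ‖a‖ ^ 2)
    (x : EuclideanSpace ℂ (Fin 2)) :
    ‖Matrix.toEuclideanCLM (𝕜 := ℂ) (n := Fin 2) !![a, b; 0, a] x‖ ≤ r * ‖x‖ := by
  have hr : 0 ≤ r := (norm_nonneg b).trans hbr
  refine (pow_le_pow_iff_left₀ (norm_nonneg _) (by positivity) two_ne_zero).mp ?_
  calc _ = ‖a * x 0 + b * x 1‖ ^ 2 + ‖a * x 1‖ ^ 2 := norm_sq_toEuclideanCLM_jordan_apply a b x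
    _ ≤ (‖a‖ * ‖x 0‖ + ‖b‖ * ‖x 1‖) ^ 2 + (‖a‖ * ‖x 1‖) ^ 2 := by
        rw [← norm_mul, ← norm_mul, ← norm_mul]
        gcongr
        exact norm_add_le _ _
    _ ≤ r ^ 2 * (‖x 0‖ ^ 2 + ‖x 1‖ ^ 2) :=
        sq_add_sq_le_of_mul_sub_eq_sq (norm_nonneg b) hbr hroot _ _
    _ = (r * ‖x‖) ^ 2 := by rw [mul_pow, EuclideanSpace.norm_sq_fin_two]

lemma le_norm_toEuclideanCLM_jordan (hbr : ‖b‖ ≤ r) (hroot : r * (r - ‖b‖) = ‖a‖ ^ 2) :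
    r ≤ ‖Matrix.toEuclideanCLM (𝕜 := ℂ) (n := Fin 2) !![a, b; 0, a]‖ := by
  set M := Matrix.toEuclideanCLM (𝕜 := ℂ) (n := Fin 2) !![a, b; 0, a]
  rcases ((norm_nonneg b).trans hbr).eq_or_lt with rfl | hr
  · exact norm_nonneg _
  set u := exp (arg b * I)
  have hb : b = ‖b‖ * u := (norm_mul_exp_arg_mul_I b).symm
  have hu : ‖u‖ = 1 := norm_exp_ofReal_mul_I _
  set x : EuclideanSpace ℂ (Fin 2) := !₂[conj a * u, r]
  have hx : ‖x‖ ^ 2 = ‖a‖ ^ 2 + r ^ 2 := by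
    simp [x, EuclideanSpace.norm_sq_fin_two, hu, add_comm]
  have hfirst : a * x 0 + b * x 1 = r ^ 2 * u := by
    have ha : a * conj a = ‖a‖ ^ 2 := by rw [mul_conj, normSq_eq_norm_sq]; norm_cast
    have hroot' : (r : ℂ) * (r - ‖b‖) = ‖a‖ ^ 2 := by exact_mod_cast hroot
    simp only [x, Matrix.cons_val_zero, Matrix.cons_val_one, Matrix.cons_val_fin_one]
    linear_combination u * ha - u * hroot' + r * hb
  have hxr : r * ‖x‖ ≤ ‖M‖ * ‖x‖ := by
    refine (pow_le_pow_iff_left₀ (by positivity) (by positivity) two_ne_zero).mp ?_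
    calc (r * ‖x‖) ^ 2 = ‖M x‖ ^ 2 := by
          rw [norm_sq_toEuclideanCLM_jordan_apply, hfirst, mul_pow, hx]
          simp only [x, norm_mul, norm_pow, norm_real, Real.norm_eq_abs, abs_of_pos hr, hu, mul_one,
            Matrix.cons_val_one, Matrix.cons_val_fin_one]
          ring
      _ ≤ (‖M‖ * ‖x‖) ^ 2 := by gcongr; exact M.le_opNorm x
  have hx0 : 0 < ‖x‖ := by nlinarith [norm_nonneg x]
  exact le_of_mul_le_mul_right hxr hx0
end

theorem norm_jordan_block (a b : ℂ) :
    ‖Matrix.toEuclideanCLM (𝕜 := ℂ) (n := Fin 2) !![a, b; 0, a]‖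
      = ‖b‖ / 2 + Real.sqrt ((‖b‖)^2 / 4 + (‖a‖)^2) := by
  set s := Real.sqrt ((‖b‖)^2 / 4 + (‖a‖)^2)
  have hs : s ^ 2 = ‖b‖ ^ 2 / 4 + ‖a‖ ^ 2 := Real.sq_sqrt (by positivity)
  have hbs : ‖b‖ / 2 ≤ s := Real.le_sqrt_of_sq_le (by nlinarith [sq_nonneg ‖a‖])
  have hbr : ‖b‖ ≤ ‖b‖ / 2 + s := by linarith
  have hroot : (‖b‖ / 2 + s) * (‖b‖ / 2 + s - ‖b‖) = ‖a‖ ^ 2 := by linear_combination hs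
  exact le_antisymm
    (ContinuousLinearMap.opNorm_le_bound _ ((norm_nonneg b).trans hbr)
      (norm_toEuclideanCLM_jordan_apply_le hbr hroot))
    (le_norm_toEuclideanCLM_jordan hbr hroot)
end
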